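/- arXiv:1809.08576 — 2 statements merged into one kernel-verified Lean document; each statement's English description precedes it below -/
import Mathlib

section
/- If S_0, …, S_8 is a terminating history sequence of Kishon's Poker algorithm, then for each i ∈ {0, 1}, the final state S_8 satisfies: if n_i < n_{1-i} then val_i < val_{1-i}. -/
/-- A global state of Kishon's Poker algorithm.  The variables `valᵢ` and `PCᵢ`
are given ambient types `ℤ` and `ℕ`; the typing condition
(`valᵢ ∈ {-1,0,1}`, `PCᵢ ∈ {1,…,5}`) is the predicate `tauP` below. -/
structure KState where
  n0 : ℕ
  v0 : ℕ
  R0 : ℕ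
  val0 : ℤ
  PC0 : ℕ
  n1 : ℕ
  v1 : ℕ
  R1 : ℕ
  val1 : ℤ
  PC1 : ℕ

/-- The initial state. -/
def KInit (S : KState) : Prop :=
  S.PC0 = 1 ∧ S.PC1 = 1 ∧ S.n0 = 0 ∧ S.v0 = 0 ∧ S.R0 = 0 ∧ S.val0 = 0 ∧
  S.n1 = 0 ∧ S.v1 = 0 ∧ S.R1 = 0 ∧ S.val1 = 0

/-- A final state. -/
def KFinal (S : KState) : Prop := S.PC0 = 5 ∧ S.PC1 = 5

/-- The variables of process `p₁` are unchanged. -/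
def Unch1 (S T : KState) : Prop :=
  T.n1 = S.n1 ∧ T.v1 = S.v1 ∧ T.R1 = S.R1 ∧ T.val1 = S.val1 ∧ T.PC1 = S.PC1

/-- The variables of process `p₀` are unchanged. -/
def Unch0 (S T : KState) : Prop :=
  T.n0 = S.n0 ∧ T.v0 = S.v0 ∧ T.R0 = S.R0 ∧ T.val0 = S.val0 ∧ T.PC0 = S.PC0

/-- A step of process `p₀`. -/
def Step0 (S T : KState) : Prop :=
  Unch1 S T ∧
  ( -- (1₀,2₀): pick-a-number
    (S.PC0 = 1 ∧ T.PC0 = 2 ∧ 0 < T.n0 ∧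
      T.v0 = S.v0 ∧ T.R0 = S.R0 ∧ T.val0 = S.val0) ∨
    -- (2₀,3₀): write R₀ := n₀
    (S.PC0 = 2 ∧ T.PC0 = 3 ∧ T.R0 = S.n0 ∧
      T.n0 = S.n0 ∧ T.v0 = S.v0 ∧ T.val0 = S.val0) ∨
    -- (3₀,4₀): read v₀ := R₁
    (S.PC0 = 3 ∧ T.PC0 = 4 ∧ T.v0 = S.R1 ∧
      T.n0 = S.n0 ∧ T.R0 = S.R0 ∧ T.val0 = S.val0) ∨
    -- (4₀,5₀): compute val₀
    (S.PC0 = 4 ∧ T.PC0 = 5 ∧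
      ((S.v0 = 0 ∨ S.v0 = S.n0) → T.val0 = 0) ∧
      (0 < S.v0 ∧ S.v0 < S.n0 → T.val0 = 1) ∧
      (S.n0 < S.v0 → T.val0 = -1) ∧
      T.n0 = S.n0 ∧ T.v0 = S.v0 ∧ T.R0 = S.R0))

/-- A step of process `p₁`. -/
def Step1 (S T : KState) : Prop :=
  Unch0 S T ∧
  ( (S.PC1 = 1 ∧ T.PC1 = 2 ∧ 0 < T.n1 ∧
      T.v1 = S.v1 ∧ T.R1 = S.R1 ∧ T.val1 = S.val1) ∨
    (S.PC1 = 2 ∧ T.PC1 = 3 ∧ T.R1 = S.n1 ∧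
      T.n1 = S.n1 ∧ T.v1 = S.v1 ∧ T.val1 = S.val1) ∨
    (S.PC1 = 3 ∧ T.PC1 = 4 ∧ T.v1 = S.R0 ∧
      T.n1 = S.n1 ∧ T.R1 = S.R1 ∧ T.val1 = S.val1) ∨
    (S.PC1 = 4 ∧ T.PC1 = 5 ∧
      ((S.v1 = 0 ∨ S.v1 = S.n1) → T.val1 = 0) ∧
      (0 < S.v1 ∧ S.v1 < S.n1 → T.val1 = 1) ∧
      (S.n1 < S.v1 → T.val1 = -1) ∧
      T.n1 = S.n1 ∧ T.v1 = S.v1 ∧ T.R1 = S.R1))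

/-- A step is a step of `p₀` or of `p₁`. -/
def KStep (S T : KState) : Prop := Step0 S T ∨ Step1 S T

/-- `H 0, …, H k` is a history sequence. -/
def KHistory (H : ℕ → KState) (k : ℕ) : Prop :=
  KInit (H 0) ∧ ∀ j, j < k → KStep (H j) (H (j + 1))

/-!
Each process publishes its number in its register before reading the other's, so whichever
process reads second sees the other's number: the numbers read satisfy `vᵢ ∈ {0, n₁₋ᵢ}` and are
not both `0`. A process that read the larger number scores `-1`, one that read `0` scores `0`,
and one that read the smaller (positive) number scores `1`; comparing cases gives the claim.
Exchanging `p₀` and `p₁` is a symmetry of the step relation, so only `p₀` needs to be treated.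
-/

/-- The value assigned by step `(4ᵢ,5ᵢ)` when `vᵢ = v` and `nᵢ = n`. -/
def pokerVal (v n : ℕ) : ℤ := if v = 0 ∨ v = n then 0 else if v < n then 1 else -1

lemma eq_pokerVal_of {v n : ℕ} {x : ℤ} (h0 : v = 0 ∨ v = n → x = 0)
    (h1 : 0 < v ∧ v < n → x = 1) (h2 : n < v → x = -1) : x = pokerVal v n := by
  unfold pokerVal
  split_ifs <;> omega

lemma pokerVal_lt_pokerVal {v₀ v₁ n₀ n₁ : ℕ} (hn₀ : 0 < n₀) (hlt : n₀ < n₁)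
    (hv₀ : v₀ = 0 ∨ v₀ = n₁) (hv₁ : v₁ = 0 ∨ v₁ = n₀) (hne : v₀ ≠ 0 ∨ v₁ ≠ 0) :
    pokerVal v₀ n₀ < pokerVal v₁ n₁ := by
  unfold pokerVal
  split_ifs <;> omega

def KState.swap (S : KState) : KState :=
  ⟨S.n1, S.v1, S.R1, S.val1, S.PC1, S.n0, S.v0, S.R0, S.val0, S.PC0⟩

-- `Step1 S.swap T.swap` and `Step0 S T` unfold to the same proposition, and vice versa.
lemma KStep.swap {S T : KState} (h : KStep S T) : KStep S.swap T.swap :=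
  h.symm

/-- The part of the invariant that concerns process `p₀`; that of `p₁` is `KProcInv S.swap`. -/
def KProcInv (S : KState) : Prop :=
  (2 ≤ S.PC0 → 0 < S.n0) ∧
  (S.PC0 ≤ 2 → S.R0 = 0) ∧
  (3 ≤ S.PC0 → S.R0 = S.n0) ∧
  (4 ≤ S.PC0 → S.v0 = 0 ∨ (3 ≤ S.PC1 ∧ S.v0 = S.n1)) ∧
  (S.PC0 = 5 → S.val0 = pokerVal S.v0 S.n0)

/-- The process that reads second finds the other's number already published, so the two
numbers read cannot both be `0`. -/
def KInv (S : KState) : Prop :=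
  KProcInv S ∧ KProcInv S.swap ∧ (4 ≤ S.PC0 → 4 ≤ S.PC1 → S.v0 ≠ 0 ∨ S.v1 ≠ 0)

lemma KProcInv.step {S T : KState} (h₀ : KProcInv S) (h₁ : KProcInv S.swap)
    (hst : KStep S T) : KProcInv T := by
  obtain ⟨hn₀, hR₀, hR₀', hv₀, hval₀⟩ := h₀
  obtain ⟨hn₁, hR₁, hR₁', -, -⟩ := h₁
  simp only [KState.swap] at hn₁ hR₁ hR₁'
  rcases hst with ⟨⟨en₁, -, -, -, epc₁⟩, h⟩ | ⟨⟨en, ev, eR, eval, epc⟩, h⟩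
  · rcases h with ⟨hpc, hpc', hn, ev, eR, eval⟩ | ⟨hpc, hpc', eR, en, ev, eval⟩ |
      ⟨hpc, hpc', ev, en, eR, eval⟩ | ⟨hpc, hpc', c₀, c₁, c₂, en, ev, eR⟩ <;>
      refine ⟨?_, ?_, ?_, ?_, fun _ => ?_⟩ <;> try (intros; omega)
    rw [en, ev]
    exact eq_pokerVal_of c₀ c₁ c₂
  · refine ⟨?_, ?_, ?_, ?_, ?_⟩
    · rw [epc, en]; exact hn₀
    · rw [epc, eR]; exact hR₀
    · rw [epc, eR, en]; exact hR₀'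
    · rw [epc, ev]
      intro h4
      have := hv₀ h4
      rcases h with ⟨hpc, hpc', -⟩ | ⟨hpc, hpc', -, en₁, -⟩ | ⟨hpc, hpc', -, en₁, -⟩ |
        ⟨hpc, hpc', -, -, -, en₁, -⟩ <;> omega
    · rw [epc, eval, ev, en]; exact hval₀

lemma KInv.step {S T : KState} (hI : KInv S) (hst : KStep S T) : KInv T := by
  obtain ⟨h₀, h₁, hread⟩ := hI
  refine ⟨h₀.step h₁ hst, h₁.step h₀ hst.swap, fun h4₀ h4₁ => ?_⟩
  obtain ⟨hn₀, -, hR₀, -, -⟩ := h₀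
  obtain ⟨hn₁, -, hR₁, -, -⟩ := h₁
  simp only [KState.swap] at hn₁ hR₁
  rcases hst with ⟨⟨-, ev₁, -, -, epc₁⟩, h⟩ | ⟨⟨-, ev₀, -, -, epc₀⟩, h⟩ <;>
    rcases h with ⟨hpc, hpc', -⟩ | ⟨hpc, hpc', -⟩ | ⟨hpc, hpc', ev, -⟩ |
      ⟨hpc, hpc', -, -, -, -, ev, -⟩ <;> omega

lemma KInv_of_init {S : KState} (h : KInit S) : KInv S := by
  obtain ⟨hpc₀, hpc₁, -, -, hR₀, -, -, -, hR₁, -⟩ := h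
  simp only [KInv, KProcInv, KState.swap]
  omega

lemma KInv_of_history {H : ℕ → KState} {k : ℕ} (hH : KHistory H k) : KInv (H k) := by
  suffices ∀ j ≤ k, KInv (H j) from this k le_rfl
  intro j hj
  induction j with
  | zero => exact KInv_of_init hH.1
  | succ j ih => exact (ih (by omega)).step (hH.2 j (by omega))

lemma KInv.swap {S : KState} (hI : KInv S) : KInv S.swap :=
  ⟨hI.2.1, hI.1, fun h₁ h₀ => (hI.2.2 h₀ h₁).symm⟩

lemma KInv.val0_lt_val1 {S : KState} (hI : KInv S) (hfin : KFinal S) (hlt : S.n0 < S.n1) :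
    S.val0 < S.val1 := by
  obtain ⟨⟨hn₀, -, -, hv₀, hval₀⟩, ⟨-, -, -, hv₁, hval₁⟩, hread⟩ := hI
  obtain ⟨hpc₀, hpc₁⟩ := hfin
  simp only [KState.swap] at hv₁ hval₁
  rw [hval₀ hpc₀, hval₁ hpc₁]
  exact pokerVal_lt_pokerVal (hn₀ (by omega)) hlt (by omega) (by omega)
    (hread (by omega) (by omega))

theorem kishon_history_correctness
    (H : ℕ → KState) (hH : KHistory H 8) (hfin : KFinal (H 8)) :
    ((H 8).n0 < (H 8).n1 → (H 8).val0 < (H 8).val1) ∧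
    ((H 8).n1 < (H 8).n0 → (H 8).val1 < (H 8).val0) := by
  have hI := KInv_of_history hH
  exact ⟨hI.val0_lt_val1 hfin, hI.swap.val0_lt_val1 hfin.symm⟩
end

section
/- Let S be any state such that S satisfies φ ∧ PC_0 = 5 ∧ PC_1 = 5. Then: (1) if n_0 = n_1 in S then val_0 = val_1 = 0 in S; and (2) for each i ∈ {0, 1}, if n_i < n_{1-i} in S then val_i < val_{1-i} in S. -/
/-- α: the conjunction α1–α5 about process `p₀`. -/
def alphaP (S : KState) : Prop :=
  (2 ≤ S.PC0 → 0 < S.n0) ∧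
  (S.PC0 ≤ 2 → S.R0 = 0) ∧
  (3 ≤ S.PC0 → S.R0 = S.n0) ∧
  (S.v0 ≠ 0 → S.v0 = S.R1) ∧
  (S.PC0 = 5 →
    (S.v0 = 0 → S.val0 = 0) ∧ (S.v0 = S.n0 → S.val0 = 0) ∧
    (0 < S.v0 ∧ S.v0 < S.n0 → S.val0 = 1) ∧ (S.n0 < S.v0 → S.val0 = -1))

/-- β: the conjunction β1–β5 about process `p₁`. -/
def betaP (S : KState) : Prop :=
  (2 ≤ S.PC1 → 0 < S.n1) ∧
  (S.PC1 ≤ 2 → S.R1 = 0) ∧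
  (3 ≤ S.PC1 → S.R1 = S.n1) ∧
  (S.v1 ≠ 0 → S.v1 = S.R0) ∧
  (S.PC1 = 5 →
    (S.v1 = 0 → S.val1 = 0) ∧ (S.v1 = S.n1 → S.val1 = 0) ∧
    (0 < S.v1 ∧ S.v1 < S.n1 → S.val1 = 1) ∧ (S.n1 < S.v1 → S.val1 = -1))

/-- γ. -/
def gammaP (S : KState) : Prop :=
  4 ≤ S.PC0 ∧ 4 ≤ S.PC1 → S.v0 = S.R1 ∨ S.v1 = S.R0

/-- τ: every state variable has a value in its type. -/
def tauP (S : KState) : Prop :=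
  (S.val0 = -1 ∨ S.val0 = 0 ∨ S.val0 = 1) ∧
  (S.val1 = -1 ∨ S.val1 = 0 ∨ S.val1 = 1) ∧
  (1 ≤ S.PC0 ∧ S.PC0 ≤ 5) ∧ (1 ≤ S.PC1 ∧ S.PC1 ≤ 5)

/-- φ = α ∧ β ∧ γ ∧ τ. -/
def phiP (S : KState) : Prop := alphaP S ∧ betaP S ∧ gammaP S ∧ tauP S

/-!
At the final location each player has read into `v` either nothing (`v = 0`) or the opponent's
number, and by γ at least one of them has read it. A player who read the opponent's number
announces `sign (own - opponent)`, a player who read nothing announces `0`. So for equal numbers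
both announce `0`, and otherwise the player with the smaller number announces `-1` or `0`, the
other `1` or `0`, and not both `0`.
-/

/-- The verdict a player announces at the final location (clause 5 of α and β), having read
`v` while holding `n`. -/
def IsVerdict (n v : ℕ) (val : ℤ) : Prop :=
  (v = 0 → val = 0) ∧ (v = n → val = 0) ∧ (0 < v ∧ v < n → val = 1) ∧ (n < v → val = -1)

theorem IsVerdict.eq_sign {n v : ℕ} {val : ℤ} (h : IsVerdict n v val) (hv : v ≠ 0) :
    val = Int.sign ((n : ℤ) - v) := by
  obtain ⟨-, h_eq, h_lt, h_gt⟩ := h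
  rcases lt_trichotomy v n with hvn | rfl | hnv
  · rw [h_lt ⟨Nat.pos_of_ne_zero hv, hvn⟩, Int.sign_eq_one_of_pos (by omega)]
  · rw [h_eq rfl, sub_self, Int.sign_zero]
  · rw [h_gt hnv, Int.sign_eq_neg_one_of_neg (by omega)]

namespace KState

def swap_s7 (S : KState) : KState :=
  ⟨S.n1, S.v1, S.R1, S.val1, S.PC1, S.n0, S.v0, S.R0, S.val0, S.PC0⟩

variable {S : KState}

theorem v0_eq_n1_of_ne_zero (hα : alphaP S) (hβ : betaP S) (h1 : 3 ≤ S.PC1) (hv : S.v0 ≠ 0) :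
    S.v0 = S.n1 :=
  (hα.2.2.2.1 hv).trans (hβ.2.2.1 h1)

theorem val0_eq_sign (hα : alphaP S) (hβ : betaP S) (h0 : S.PC0 = 5) (h1 : 3 ≤ S.PC1)
    (hv : S.v0 ≠ 0) : S.val0 = Int.sign ((S.n0 : ℤ) - S.n1) := by
  have hverdict : IsVerdict S.n0 S.v0 S.val0 := hα.2.2.2.2 h0
  rw [hverdict.eq_sign hv, v0_eq_n1_of_ne_zero hα hβ h1 hv]

theorem val0_eq_zero_or_eq_sign (hα : alphaP S) (hβ : betaP S) (h0 : S.PC0 = 5)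
    (h1 : 3 ≤ S.PC1) : S.val0 = 0 ∨ S.val0 = Int.sign ((S.n0 : ℤ) - S.n1) := by
  by_cases hv : S.v0 = 0
  · exact .inl ((hα.2.2.2.2 h0).1 hv)
  · exact .inr (val0_eq_sign hα hβ h0 h1 hv)

theorem val1_eq_sign (hα : alphaP S) (hβ : betaP S) (h0 : 3 ≤ S.PC0) (h1 : S.PC1 = 5)
    (hv : S.v1 ≠ 0) : S.val1 = Int.sign ((S.n1 : ℤ) - S.n0) :=
  val0_eq_sign (S := S.swap_s7) hβ hα h1 h0 hv

theorem val1_eq_zero_or_eq_sign (hα : alphaP S) (hβ : betaP S) (h0 : 3 ≤ S.PC0)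
    (h1 : S.PC1 = 5) : S.val1 = 0 ∨ S.val1 = Int.sign ((S.n1 : ℤ) - S.n0) :=
  val0_eq_zero_or_eq_sign (S := S.swap_s7) hβ hα h1 h0

theorem v0_ne_zero_or_v1_ne_zero (hα : alphaP S) (hβ : betaP S) (hγ : gammaP S)
    (h0 : S.PC0 = 5) (h1 : S.PC1 = 5) : S.v0 ≠ 0 ∨ S.v1 ≠ 0 := by
  have hR0 : S.R0 = S.n0 := hα.2.2.1 (by omega)
  have hR1 : S.R1 = S.n1 := hβ.2.2.1 (by omega)
  have hn0 : 0 < S.n0 := hα.1 (by omega)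
  have hn1 : 0 < S.n1 := hβ.1 (by omega)
  rcases hγ ⟨by omega, by omega⟩ with h | h
  · exact .inl (by omega)
  · exact .inr (by omega)

theorem val0_lt_val1 (hα : alphaP S) (hβ : betaP S) (hv : S.v0 ≠ 0 ∨ S.v1 ≠ 0)
    (h0 : S.PC0 = 5) (h1 : S.PC1 = 5) (hn : S.n0 < S.n1) : S.val0 < S.val1 := by
  have hsign0 : Int.sign ((S.n0 : ℤ) - S.n1) = -1 := Int.sign_eq_neg_one_of_neg (by omega)
  have hsign1 : Int.sign ((S.n1 : ℤ) - S.n0) = 1 := Int.sign_eq_one_of_pos (by omega)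
  have hval0 := val0_eq_zero_or_eq_sign hα hβ h0 (by omega)
  have hval1 := val1_eq_zero_or_eq_sign hα hβ (by omega) h1
  rcases hv with hv | hv
  · have := val0_eq_sign hα hβ h0 (by omega) hv
    omega
  · have := val1_eq_sign hα hβ (by omega) h1 hv
    omega

end KState

open KState in
theorem kishon_final_state_lemma
    (S : KState) (hphi : phiP S) (h0 : S.PC0 = 5) (h1 : S.PC1 = 5) :
    (S.n0 = S.n1 → S.val0 = 0 ∧ S.val1 = 0) ∧
    (S.n0 < S.n1 → S.val0 < S.val1) ∧
    (S.n1 < S.n0 → S.val1 < S.val0) := by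
  obtain ⟨hα, hβ, hγ, -⟩ := hphi
  have hv := v0_ne_zero_or_v1_ne_zero hα hβ hγ h0 h1
  refine ⟨fun hn => ?_, val0_lt_val1 hα hβ hv h0 h1,
    val0_lt_val1 (S := S.swap_s7) hβ hα hv.symm h1 h0⟩
  have hval0 := val0_eq_zero_or_eq_sign hα hβ h0 (by omega)
  have hval1 := val1_eq_zero_or_eq_sign hα hβ (by omega) h1
  simp only [hn, sub_self, Int.sign_zero, or_self] at hval0 hval1
  exact ⟨hval0, hval1⟩
end
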